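/- arXiv:1610.05660 — 3 statements merged into one kernel-verified Lean document; each statement's English description precedes it below -/
import Mathlib

section
/- Let A : ℝ → Matrix n n ℝ be given by A(θ) = Q(θ) Λ(θ) Q(θ)ᵀ, where each Q(θ) is an orthogonal matrix, Λ(θ) = diag(λ₁(θ),…,λₙ(θ)), the maps θ ↦ Q(θ) and θ ↦ λᵢ(θ) are differentiable at θ₀, and the eigenvalues λ₁(θ₀),…,λₙ(θ₀) are pairwise distinct. Let f : ℝ → ℝ be differentiable and define f(A)(θ) = Q(θ)·diag(f(λ₁(θ)),…,f(λₙ(θ)))·Q(θ)ᵀ. Then the derivative of f(A) at θ₀ satisfies (f(A))′(θ₀) = Q(θ₀) · ( J ∘ ( Q(θ₀)ᵀ · A′(θ₀) · Q(θ₀) ) ) · Q(θ₀)ᵀ, where ∘ is the Hadamard (entrywise) product and J is the matrix with J_{ij} = (f(λᵢ(θ₀)) − f(λⱼ(θ₀)))/(λᵢ(θ₀) − λⱼ(θ₀)) for i ≠ j and J_{ii} = f′(λᵢ(θ₀)). -/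
open Matrix
open scoped Matrix

lemma conj_diag_apply {n : ℕ} (P R : Matrix (Fin n) (Fin n) ℝ) (d : Fin n → ℝ)
    (i j : Fin n) : (P * Matrix.diagonal d * Rᵀ) i j = ∑ k, P i k * d k * R j k := by
  rw [Matrix.mul_apply]
  refine Finset.sum_congr rfl fun k _ => ?_
  rw [Matrix.mul_diagonal, Matrix.transpose_apply]

lemma deriv_sum_prod {n : ℕ} (θ₀ : ℝ) (q1 q2 g : ℝ → Fin n → ℝ)
    (q1' q2' g' : Fin n → ℝ)
    (h1 : ∀ k, HasDerivAt (fun θ => q1 θ k) (q1' k) θ₀)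
    (h2 : ∀ k, HasDerivAt (fun θ => q2 θ k) (q2' k) θ₀)
    (hg : ∀ k, HasDerivAt (fun θ => g θ k) (g' k) θ₀) :
    HasDerivAt (fun θ => ∑ k, q1 θ k * g θ k * q2 θ k)
      (∑ k, (q1' k * g θ₀ k * q2 θ₀ k + q1 θ₀ k * g' k * q2 θ₀ k
        + q1 θ₀ k * g θ₀ k * q2' k)) θ₀ := by
  apply HasDerivAt.fun_sum
  intro k _
  have h := ((h1 k).fun_mul (hg k)).fun_mul (h2 k)
  exact h.congr_deriv (by ring)

/-- Derivative of a spectral transform of a matrix-valued map (Daleckii–Krein formula). -/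
theorem stmt_0 {n : ℕ} (Q : ℝ → Matrix (Fin n) (Fin n) ℝ)
    (lam : ℝ → Fin n → ℝ) (A fA : ℝ → Matrix (Fin n) (Fin n) ℝ)
    (θ₀ : ℝ) (A' : Matrix (Fin n) (Fin n) ℝ) (Q' : Matrix (Fin n) (Fin n) ℝ)
    (lam' : Fin n → ℝ) (f f' : ℝ → ℝ) (J : Matrix (Fin n) (Fin n) ℝ)
    (hA : ∀ θ, A θ = Q θ * Matrix.diagonal (lam θ) * (Q θ)ᵀ)
    (hQorth : ∀ θ, (Q θ)ᵀ * Q θ = 1)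
    (hQdiff : ∀ i j, HasDerivAt (fun θ => Q θ i j) (Q' i j) θ₀)
    (hlamdiff : ∀ i, HasDerivAt (fun θ => lam θ i) (lam' i) θ₀)
    (hdistinct : ∀ i j, i ≠ j → lam θ₀ i ≠ lam θ₀ j)
    (hf : ∀ x, HasDerivAt f (f' x) x)
    (hfA : ∀ θ, fA θ = Q θ * Matrix.diagonal (fun i => f (lam θ i)) * (Q θ)ᵀ)
    (hA' : ∀ i j, HasDerivAt (fun θ => A θ i j) (A' i j) θ₀)
    (hJ : ∀ i j, J i j = if i = j then f' (lam θ₀ i)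
        else (f (lam θ₀ i) - f (lam θ₀ j)) / (lam θ₀ i - lam θ₀ j)) :
    ∀ i j, HasDerivAt (fun θ => fA θ i j)
      ((Q θ₀ * (J ⊙ ((Q θ₀)ᵀ * A' * Q θ₀)) * (Q θ₀)ᵀ) i j) θ₀ := by
  set Q₀ := Q θ₀ with hQ₀
  set Λ : Fin n → ℝ := lam θ₀ with hΛ
  set L : Matrix (Fin n) (Fin n) ℝ := Matrix.diagonal Λ with hL
  set L' : Matrix (Fin n) (Fin n) ℝ := Matrix.diagonal lam' with hL'
  set F : Matrix (Fin n) (Fin n) ℝ := Matrix.diagonal (fun k => f (Λ k)) with hF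
  set F' : Matrix (Fin n) (Fin n) ℝ :=
    Matrix.diagonal (fun k => f' (Λ k) * lam' k) with hF'
  set S : Matrix (Fin n) (Fin n) ℝ := Q₀ᵀ * Q' with hS
  have hQQt : Q₀ * Q₀ᵀ = 1 := mul_eq_one_comm.mp (hQorth θ₀)
  -- derivative of fA entrywise
  have hfA' : ∀ i j, HasDerivAt (fun θ => fA θ i j)
      ((Q' * F * Q₀ᵀ + Q₀ * F' * Q₀ᵀ + Q₀ * F * Q'ᵀ) i j) θ₀ := by
    intro i j
    have key := deriv_sum_prod θ₀ (fun θ k => Q θ i k) (fun θ k => Q θ j k)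
      (fun θ k => f (lam θ k)) (fun k => Q' i k) (fun k => Q' j k)
      (fun k => f' (Λ k) * lam' k)
      (fun k => hQdiff i k) (fun k => hQdiff j k)
      (fun k => (hf (lam θ₀ k)).comp θ₀ (hlamdiff k))
    have heq : (fun θ => fA θ i j)
        = fun θ => ∑ k, Q θ i k * f (lam θ k) * Q θ j k := by
      funext θ
      rw [hfA θ, conj_diag_apply]
    rw [heq]
    convert key using 1
    simp only [Matrix.add_apply, hF, hF', conj_diag_apply,
      ← Finset.sum_add_distrib]
    rfl
  -- A' equals the formula
  have hA'eq : A' = Q' * L * Q₀ᵀ + Q₀ * L' * Q₀ᵀ + Q₀ * L * Q'ᵀ := by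
    ext i j
    have key := deriv_sum_prod θ₀ (fun θ k => Q θ i k) (fun θ k => Q θ j k)
      (fun θ k => lam θ k) (fun k => Q' i k) (fun k => Q' j k) lam'
      (fun k => hQdiff i k) (fun k => hQdiff j k) hlamdiff
    have heq : (fun θ => A θ i j)
        = fun θ => ∑ k, Q θ i k * lam θ k * Q θ j k := by
      funext θ
      rw [hA θ, conj_diag_apply]
    have h2 : HasDerivAt (fun θ => A θ i j)
        (∑ k, (Q' i k * Λ k * Q₀ j k + Q₀ i k * lam' k * Q₀ j k
          + Q₀ i k * Λ k * Q' j k)) θ₀ := by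
      rw [heq]; exact key
    have := (hA' i j).unique h2
    rw [this]
    simp only [Matrix.add_apply, hL, hL', conj_diag_apply,
      ← Finset.sum_add_distrib]
  -- skew symmetry
  have hskew : Q'ᵀ * Q₀ + Q₀ᵀ * Q' = 0 := by
    ext i j
    have key := deriv_sum_prod θ₀ (fun θ k => Q θ k i) (fun θ k => Q θ k j)
      (fun _ _ => (1 : ℝ)) (fun k => Q' k i) (fun k => Q' k j) (fun _ => 0)
      (fun k => hQdiff k i) (fun k => hQdiff k j)
      (fun k => hasDerivAt_const θ₀ 1)
    have hconst : (fun θ => ∑ k, Q θ k i * 1 * Q θ k j)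
        = fun _ => ((1 : Matrix (Fin n) (Fin n) ℝ) i j) := by
      funext θ
      have := hQorth θ
      calc ∑ k, Q θ k i * 1 * Q θ k j = ((Q θ)ᵀ * Q θ) i j := by
            simp [Matrix.mul_apply, Matrix.transpose_apply, mul_comm]
        _ = (1 : Matrix (Fin n) (Fin n) ℝ) i j := by rw [this]
    have hzero : HasDerivAt (fun θ => ∑ k, Q θ k i * 1 * Q θ k j)
        (0 : ℝ) θ₀ := by
      rw [hconst]; exact hasDerivAt_const θ₀ _
    have huniq := hzero.unique key
    have : ∑ k, (Q' k i * 1 * Q₀ k j + Q₀ k i * 0 * Q₀ k j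
        + Q₀ k i * 1 * Q' k j) = 0 := huniq.symm
    simp only [Matrix.add_apply, Matrix.zero_apply, Matrix.mul_apply,
      Matrix.transpose_apply]
    rw [← Finset.sum_add_distrib, ← this]
    refine Finset.sum_congr rfl fun k _ => ?_
    simp only [hQ₀]
    ring
  have hskew' : Q'ᵀ * Q₀ = -S := by
    rw [hS]; linear_combination (norm := abel) hskew
  have hskew'' : S = -(Q'ᵀ * Q₀) := by rw [hskew']; simp
  -- compute Q₀ᵀ * A' * Q₀
  have hM : Q₀ᵀ * A' * Q₀ = S * L - L * S + L' := by
    rw [hA'eq]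
    have e1 : Q₀ᵀ * (Q' * L * Q₀ᵀ) * Q₀ = S * L := by
      rw [hS]
      calc Q₀ᵀ * (Q' * L * Q₀ᵀ) * Q₀ = Q₀ᵀ * Q' * L * (Q₀ᵀ * Q₀) := by
            simp only [mul_assoc]
        _ = Q₀ᵀ * Q' * L := by rw [hQorth θ₀, mul_one]
    have e2 : Q₀ᵀ * (Q₀ * L' * Q₀ᵀ) * Q₀ = L' := by
      calc Q₀ᵀ * (Q₀ * L' * Q₀ᵀ) * Q₀ = (Q₀ᵀ * Q₀) * L' * (Q₀ᵀ * Q₀) := by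
            simp only [mul_assoc]
        _ = L' := by rw [hQorth θ₀, one_mul, mul_one]
    have e3 : Q₀ᵀ * (Q₀ * L * Q'ᵀ) * Q₀ = -(L * S) := by
      calc Q₀ᵀ * (Q₀ * L * Q'ᵀ) * Q₀ = (Q₀ᵀ * Q₀) * L * (Q'ᵀ * Q₀) := by
            simp only [mul_assoc]
        _ = L * (Q'ᵀ * Q₀) := by rw [hQorth θ₀, one_mul]
        _ = -(L * S) := by rw [hskew', mul_neg]
    rw [mul_add, mul_add, add_mul, add_mul, e1, e2, e3]
    abel
  -- Hadamard identity
  have hHad : J ⊙ (Q₀ᵀ * A' * Q₀) = S * F - F * S + F' := by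
    rw [hM]
    ext k l
    by_cases hkl : k = l
    · subst hkl
      simp only [Matrix.hadamard_apply, Matrix.sub_apply, Matrix.add_apply,
        hL, hL', hF, hF', Matrix.mul_diagonal, Matrix.diagonal_mul,
        Matrix.diagonal_apply_eq, hJ k k, if_pos rfl]
      simp
      ring
    · have hne : Λ k ≠ Λ l := hdistinct k l hkl
      have hsub : Λ k - Λ l ≠ 0 := sub_ne_zero.mpr hne
      simp only [Matrix.hadamard_apply, Matrix.sub_apply, Matrix.add_apply,
        hL, hL', hF, hF', Matrix.mul_diagonal, Matrix.diagonal_mul,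
        Matrix.diagonal_apply_ne _ hkl, hJ k l, if_neg hkl, add_zero]
      rw [div_mul_eq_mul_div, div_eq_iff hsub]
      ring
  -- final algebra
  have hfinal : Q₀ * (J ⊙ (Q₀ᵀ * A' * Q₀)) * Q₀ᵀ
      = Q' * F * Q₀ᵀ + Q₀ * F' * Q₀ᵀ + Q₀ * F * Q'ᵀ := by
    rw [hHad]
    have g1 : Q₀ * (S * F) * Q₀ᵀ = Q' * F * Q₀ᵀ := by
      rw [hS]
      calc Q₀ * (Q₀ᵀ * Q' * F) * Q₀ᵀ = (Q₀ * Q₀ᵀ) * (Q' * F * Q₀ᵀ) := by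
            simp only [mul_assoc]
        _ = Q' * F * Q₀ᵀ := by rw [hQQt, one_mul]
    have g2 : Q₀ * (F * S) * Q₀ᵀ = -(Q₀ * F * Q'ᵀ) := by
      rw [hskew'']
      calc Q₀ * (F * -(Q'ᵀ * Q₀)) * Q₀ᵀ
          = -((Q₀ * F * Q'ᵀ) * (Q₀ * Q₀ᵀ)) := by
            simp only [mul_neg, neg_mul, mul_assoc]
        _ = -(Q₀ * F * Q'ᵀ) := by rw [hQQt, mul_one]
    have expand : Q₀ * (S * F - F * S + F') * Q₀ᵀ
        = Q₀ * (S * F) * Q₀ᵀ - Q₀ * (F * S) * Q₀ᵀ + Q₀ * F' * Q₀ᵀ := by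
      noncomm_ring
    rw [expand, g1, g2]
    abel
  intro i j
  rw [hfinal]
  exact hfA' i j
end

section
/- Let G : ℝⁿ → Matrix n n ℝ be continuously differentiable with G(θ) symmetric and positive definite (in particular det G(θ) > 0 and G(θ) invertible) for all θ, and suppose the symmetry condition ∂G_{km}/∂θ_j (θ) = ∂G_{jm}/∂θ_k (θ) holds for all indices j, k, m and all θ. Then for every index i and every θ, (det G(θ))^{−1/2} · Σ_j ∂/∂θ_j [ (G⁻¹)_{ij} · (det G)^{1/2} ](θ) = (1/2) · Σ_j ∂/∂θ_j (G⁻¹)_{ij} (θ); that is, the two drift correction terms Ω defined by these two expressions coincide. -/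
open scoped BigOperators

section aux

variable {n : ℕ}

/-- Differentiability of the determinant of a matrix-valued function with
differentiable entries. -/
lemma aux_det_diff {M : (Fin n → ℝ) → Matrix (Fin n) (Fin n) ℝ} {θ : Fin n → ℝ}
    (h : ∀ k m, DifferentiableAt ℝ (fun θ' => M θ' k m) θ) :
    DifferentiableAt ℝ (fun θ' => (M θ').det) θ := by
  classical
  have hexp : (fun θ' => (M θ').det)
      = fun θ' => ∑ σ : Equiv.Perm (Fin n), ((Equiv.Perm.sign σ : ℤ) : ℝ) * ∏ l, M θ' (σ l) l :=
    funext fun θ' => Matrix.det_apply' _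
  rw [hexp]
  exact DifferentiableAt.fun_sum fun σ _ =>
    ((HasFDerivAt.finset_prod (fun l (_ : l ∈ Finset.univ) =>
      (h (σ l) l).hasFDerivAt)).differentiableAt).const_mul _

lemma det_updateCol_expand (A : Matrix (Fin n) (Fin n) ℝ) (k : Fin n) (b : Fin n → ℝ) :
    (A.updateCol k b).det
      = ∑ σ : Equiv.Perm (Fin n), ((Equiv.Perm.sign σ : ℤ) : ℝ) *
          (b (σ k) * ∏ r ∈ Finset.univ.erase k, A (σ r) r) := by
  classical
  rw [Matrix.det_apply']
  refine Finset.sum_congr rfl fun σ _ => ?_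
  congr 1
  rw [← Finset.mul_prod_erase Finset.univ _ (Finset.mem_univ k)]
  congr 1
  · simp [Matrix.updateCol_apply]
  · refine Finset.prod_congr rfl fun r hr => ?_
    simp [Matrix.updateCol_apply, (Finset.mem_erase.mp hr).1]

/-- Jacobi's formula at a point, applied to a direction `v`. -/
lemma aux_jacobi {M : (Fin n → ℝ) → Matrix (Fin n) (Fin n) ℝ} {θ : Fin n → ℝ}
    (h : ∀ k m, DifferentiableAt ℝ (fun θ' => M θ' k m) θ) (v : Fin n → ℝ) :
    fderiv ℝ (fun θ' => (M θ').det) θ v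
      = ∑ k, ∑ m, (M θ).adjugate k m * fderiv ℝ (fun θ' => M θ' m k) θ v := by
  classical
  have hexp : (fun θ' => (M θ').det)
      = fun θ' => ∑ σ : Equiv.Perm (Fin n), ((Equiv.Perm.sign σ : ℤ) : ℝ) * ∏ l, M θ' (σ l) l :=
    funext fun θ' => Matrix.det_apply' _
  have hdet : HasFDerivAt (fun θ' => (M θ').det)
      (∑ σ : Equiv.Perm (Fin n), ((Equiv.Perm.sign σ : ℤ) : ℝ) •
        ∑ l, (∏ r ∈ Finset.univ.erase l, M θ (σ r) r) • fderiv ℝ (fun θ' => M θ' (σ l) l) θ) θ := by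
    rw [hexp]
    exact HasFDerivAt.fun_sum fun σ _ =>
      (HasFDerivAt.finset_prod (fun l _ => (h (σ l) l).hasFDerivAt)).const_mul _
  rw [hdet.fderiv]
  have hcol : ∀ k, (∑ m, (M θ).adjugate k m * fderiv ℝ (fun θ' => M θ' m k) θ v)
      = ((M θ).updateCol k fun m => fderiv ℝ (fun θ' => M θ' m k) θ v).det := by
    intro k
    rw [← Matrix.cramer_apply, Matrix.cramer_eq_adjugate_mulVec]
    simp [Matrix.mulVec, dotProduct]
  rw [Finset.sum_congr rfl fun k _ => hcol k]
  rw [Finset.sum_congr rfl fun k _ => det_updateCol_expand (M θ) k _]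
  rw [Finset.sum_comm]
  simp only [ContinuousLinearMap.sum_apply, ContinuousLinearMap.smul_apply, smul_eq_mul]
  refine Finset.sum_congr rfl fun σ _ => ?_
  rw [Finset.mul_sum]
  exact Finset.sum_congr rfl fun l _ => by ring

end aux

/-- Equivalence of the two drift correction terms `Ω` for a Langevin diffusion on a
manifold: for a `C¹`, symmetric, positive-definite metric `G` satisfying the symmetry
condition `∂ⱼG_{km} = ∂ₖG_{jm}`, the term
`|G|^{-1/2} Σⱼ ∂ⱼ [ (G⁻¹)_{ij} |G|^{1/2} ]` coincides with `(1/2) Σⱼ ∂ⱼ (G⁻¹)_{ij}`. -/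
theorem stmt_10 {n : ℕ} (G : (Fin n → ℝ) → Matrix (Fin n) (Fin n) ℝ)
    (hG1 : ∀ i j, ContDiff ℝ 1 fun θ => G θ i j)
    (hGpos : ∀ θ, (G θ).PosDef)
    (hdet : ∀ θ, 0 < (G θ).det)
    (hinv : ∀ θ, IsUnit (G θ).det)
    (hsym : ∀ (j k m : Fin n) (θ : Fin n → ℝ),
      fderiv ℝ (fun θ' => G θ' k m) θ (Pi.single j 1)
        = fderiv ℝ (fun θ' => G θ' j m) θ (Pi.single k 1)) :
    ∀ (i : Fin n) (θ : Fin n → ℝ),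
      (Real.sqrt (G θ).det)⁻¹
          * ∑ j, fderiv ℝ (fun θ' => (G θ')⁻¹ i j * Real.sqrt (G θ').det) θ (Pi.single j 1)
        = (1 / 2) * ∑ j, fderiv ℝ (fun θ' => (G θ')⁻¹ i j) θ (Pi.single j 1) := by
  intro i θ
  classical
  -- basic abbreviations
  set A : Matrix (Fin n) (Fin n) ℝ := G θ with hAdef
  set W : Matrix (Fin n) (Fin n) ℝ := (G θ)⁻¹ with hWdef
  set d : ℝ := (G θ).det with hddef
  set s : ℝ := Real.sqrt (G θ).det with hsdef
  have hd0 : d ≠ 0 := ne_of_gt (hdet θ)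
  have hs0 : s ≠ 0 := ne_of_gt (Real.sqrt_pos.mpr (hdet θ))
  have hss : s * s = d := Real.mul_self_sqrt (le_of_lt (hdet θ))
  -- differentiability facts
  have hdiffG : ∀ k m, DifferentiableAt ℝ (fun θ' => G θ' k m) θ :=
    fun k m => ((hG1 k m).differentiable one_ne_zero) θ
  have hdiffd : DifferentiableAt ℝ (fun θ' => (G θ').det) θ := aux_det_diff hdiffG
  have hdiffadj : ∀ k m, DifferentiableAt ℝ (fun θ' => (G θ').adjugate k m) θ := by
    intro k m
    have hfun : (fun θ' => (G θ').adjugate k m)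
        = fun θ' => ((G θ').updateRow m (Pi.single k 1)).det :=
      funext fun θ' => Matrix.adjugate_apply _ _ _
    rw [hfun]
    refine aux_det_diff fun a b => ?_
    by_cases hab : a = m
    · subst hab
      simp only [Matrix.updateRow_self]
      exact differentiableAt_const _
    · simp only [Matrix.updateRow_ne hab]
      exact hdiffG a b
  have hWfun : ∀ k m, (fun θ' => (G θ')⁻¹ k m)
      = fun θ' => ((G θ').det)⁻¹ * (G θ').adjugate k m := by
    intro k m
    funext θ'
    rw [Matrix.inv_def]
    simp [Ring.inverse_eq_inv', smul_eq_mul]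
  have hdiffW : ∀ k m, DifferentiableAt ℝ (fun θ' => (G θ')⁻¹ k m) θ := by
    intro k m
    rw [hWfun k m]
    exact (hdiffd.inv hd0).mul (hdiffadj k m)
  -- notations for derivatives
  set D : Fin n → Fin n → Fin n → ℝ :=
    fun j k m => fderiv ℝ (fun θ' => G θ' k m) θ (Pi.single j 1) with hDdef
  set DW : Fin n → Fin n → ℝ :=
    fun j m => fderiv ℝ (fun θ' => (G θ')⁻¹ i m) θ (Pi.single j 1) with hDWdef
  set Dd : Fin n → ℝ :=
    fun j => fderiv ℝ (fun θ' => (G θ').det) θ (Pi.single j 1) with hDddef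
  -- adjugate vs inverse
  have hadj : ∀ k m, (G θ).adjugate k m = d * W k m := by
    intro k m
    have hWam : W k m = d⁻¹ * (G θ).adjugate k m := congrFun (hWfun k m) θ
    rw [hWam]
    field_simp
  -- Jacobi formula
  have hJac : ∀ j, Dd j = d * ∑ k, ∑ m, W k m * D j m k := by
    intro j
    rw [hDddef]
    simp only []
    rw [aux_jacobi hdiffG (Pi.single j 1)]
    rw [Finset.mul_sum]
    refine Finset.sum_congr rfl fun k _ => ?_
    rw [Finset.mul_sum]
    refine Finset.sum_congr rfl fun m _ => ?_
    rw [hadj k m]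
    ring
  -- derivative of inverse: key cancellation identity
  have hkey : ∀ (j m' : Fin n),
      (∑ l, (W i l * D j l m' + A l m' * DW j l)) = 0 := by
    intro j m'
    have hfun : (fun θ' => ∑ l, (G θ')⁻¹ i l * G θ' l m')
        = fun _ => (1 : Matrix (Fin n) (Fin n) ℝ) i m' := by
      funext θ'
      rw [← Matrix.mul_apply, Matrix.nonsing_inv_mul _ (hinv θ')]
    have hdiffterm : ∀ l : Fin n,
        DifferentiableAt ℝ (fun θ' => (G θ')⁻¹ i l * G θ' l m') θ :=
      fun l => (hdiffW i l).mul (hdiffG l m')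
    have h0 : fderiv ℝ (fun θ' => ∑ l, (G θ')⁻¹ i l * G θ' l m') θ = 0 := by
      rw [hfun]; exact fderiv_const_apply _
    have hsum := fderiv_fun_sum (u := Finset.univ)
      (A := fun l θ' => (G θ')⁻¹ i l * G θ' l m') (fun l _ => hdiffterm l)
    rw [h0] at hsum
    have happ := congrArg (fun L : (Fin n → ℝ) →L[ℝ] ℝ => L (Pi.single j 1)) hsum.symm
    simp only [ContinuousLinearMap.sum_apply, ContinuousLinearMap.zero_apply] at happ
    rw [← happ]
    refine Finset.sum_congr rfl fun l _ => ?_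
    rw [fderiv_fun_mul (hdiffW i l) (hdiffG l m')]
    simp only [ContinuousLinearMap.add_apply, ContinuousLinearMap.smul_apply, smul_eq_mul]
    rfl
  -- formula for the derivative of the inverse entries
  have hDW : ∀ j m, DW j m = -∑ m', ∑ l, W i l * D j l m' * W m' m := by
    intro j m
    have h1 : DW j m = ∑ l, DW j l * (1 : Matrix (Fin n) (Fin n) ℝ) l m := by
      simp [Matrix.one_apply, Finset.sum_ite_eq]
    have h2 : ∀ l : Fin n, (1 : Matrix (Fin n) (Fin n) ℝ) l m = ∑ m', A l m' * W m' m := by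
      intro l
      rw [← Matrix.mul_apply (M := A) (N := W)]
      rw [hAdef, hWdef, Matrix.mul_nonsing_inv _ (hinv θ)]
    have h3 : DW j m = ∑ m', (∑ l, A l m' * DW j l) * W m' m := by
      rw [h1]
      calc ∑ l, DW j l * (1 : Matrix (Fin n) (Fin n) ℝ) l m
          = ∑ l, ∑ m', DW j l * (A l m' * W m' m) := by
            refine Finset.sum_congr rfl fun l _ => ?_
            rw [h2 l, Finset.mul_sum]
        _ = ∑ m', ∑ l, DW j l * (A l m' * W m' m) := Finset.sum_comm
        _ = ∑ m', (∑ l, A l m' * DW j l) * W m' m := by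
            refine Finset.sum_congr rfl fun m' _ => ?_
            rw [Finset.sum_mul]
            refine Finset.sum_congr rfl fun l _ => ?_
            ring
    have h4 : ∀ m', (∑ l, A l m' * DW j l) = -∑ l, W i l * D j l m' := by
      intro m'
      have := hkey j m'
      rw [Finset.sum_add_distrib] at this
      linarith [this]
    rw [h3]
    rw [Finset.sum_congr rfl fun m' _ => by rw [h4 m']]
    rw [← Finset.sum_neg_distrib]
    refine Finset.sum_congr rfl fun m' _ => ?_
    rw [neg_mul, Finset.sum_mul]
  -- sqrt derivative
  have hsqrt : HasFDerivAt (fun θ' => Real.sqrt (G θ').det)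
      ((1 / (2 * Real.sqrt (G θ).det)) • fderiv ℝ (fun θ' => (G θ').det) θ) θ :=
    HasFDerivAt.sqrt hdiffd.hasFDerivAt hd0
  have hDs : ∀ j, fderiv ℝ (fun θ' => Real.sqrt (G θ').det) θ (Pi.single j 1)
      = (1 / (2 * s)) * Dd j := by
    intro j
    rw [hsqrt.fderiv]
    simp [smul_eq_mul]
    rfl
  -- product rule for each summand of the LHS
  have hprod : ∀ j, fderiv ℝ (fun θ' => (G θ')⁻¹ i j * Real.sqrt (G θ').det) θ (Pi.single j 1)
      = W i j * ((1 / (2 * s)) * Dd j) + s * DW j j := by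
    intro j
    rw [fderiv_fun_mul (hdiffW i j) hsqrt.differentiableAt]
    simp only [ContinuousLinearMap.add_apply, ContinuousLinearMap.smul_apply, smul_eq_mul]
    rw [hDs j]
  -- the triple sums
  set T : Fin n → ℝ := fun j => ∑ k, ∑ m, W k m * D j m k with hTdef
  have hswap3 : ∀ f : Fin n → Fin n → Fin n → ℝ,
      (∑ a, ∑ b, ∑ c, f a b c) = ∑ a, ∑ b, ∑ c, f c b a := by
    intro f
    calc (∑ a, ∑ b, ∑ c, f a b c)
        = ∑ b, ∑ a, ∑ c, f a b c := Finset.sum_comm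
      _ = ∑ b, ∑ c, ∑ a, f a b c := Finset.sum_congr rfl fun b _ => Finset.sum_comm
      _ = ∑ c, ∑ b, ∑ a, f a b c := Finset.sum_comm
  have hS : (∑ j, W i j * T j) = -∑ j, DW j j := by
    have e1 : (∑ j, W i j * T j) = ∑ j, ∑ k, ∑ m, W i j * (W k m * D m j k) := by
      refine Finset.sum_congr rfl fun j _ => ?_
      rw [hTdef]
      simp only []
      rw [Finset.mul_sum]
      refine Finset.sum_congr rfl fun k _ => ?_
      rw [Finset.mul_sum]
      refine Finset.sum_congr rfl fun m _ => ?_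
      have hs' : D j m k = D m j k := by
        rw [hDdef]
        exact hsym j m k θ
      rw [hs']
    have e2 : (∑ j, DW j j) = -∑ j, ∑ k, ∑ m, W i m * D j m k * W k j := by
      rw [Finset.sum_congr rfl fun j (_ : j ∈ Finset.univ) => hDW j j,
        Finset.sum_neg_distrib]
    rw [e1, e2, neg_neg]
    rw [hswap3 fun a b c => W i a * (W b c * D c a b)]
    refine Finset.sum_congr rfl fun j _ => ?_
    refine Finset.sum_congr rfl fun k _ => ?_
    refine Finset.sum_congr rfl fun m _ => ?_
    ring
  -- put everything together
  rw [Finset.sum_congr rfl fun j (_ : j ∈ Finset.univ) => hprod j]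
  have hlhs : (∑ j, (W i j * ((1 / (2 * s)) * Dd j) + s * DW j j))
      = (s / 2) * (∑ j, W i j * T j) + s * ∑ j, DW j j := by
    rw [Finset.sum_add_distrib, Finset.mul_sum, Finset.mul_sum]
    congr 1
    refine Finset.sum_congr rfl fun j _ => ?_
    rw [hJac j, ← hss]
    field_simp
    ring
  rw [hlhs, hS]
  have hY : (∑ j, fderiv ℝ (fun θ' => (G θ')⁻¹ i j) θ (Pi.single j 1)) = ∑ j, DW j j :=
    Finset.sum_congr rfl fun j _ => rfl
  rw [hY]
  field_simp
  ring
end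

section
/- Let α, β ∈ ℝⁿ with 0 ≤ α_j ≤ β_j for all j, let ρ ∈ [0,1], let θ* ∈ ℝⁿ satisfy α_j ≤ θ*_j ≤ β_j for all j, and let v ∈ ℝⁿ with p = θ* + v. Define J⁻ = { j : p_j < (1−ρ)·α_j }, J⁺ = { j : p_j > (1+ρ)·β_j }, and c = min of the set {1} ∪ { ((1−ρ)·α_j − θ*_j)²/v_j² : j ∈ J⁻ } ∪ { ((1+ρ)·β_j − θ*_j)²/v_j² : j ∈ J⁺ }. Then the corrected point p̂ = θ* + √c · v satisfies (1−ρ)·α_j ≤ p̂_j ≤ (1+ρ)·β_j for every j = 1,…,n. -/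
open scoped Classical

/-- Eigenvalue-adaptation step: the corrected point `p̂ = θ* + √c·v`, where `c` is the
minimum of `1` and of the ratios `((1∓ρ)·bound_j − θ*_j)²/v_j²` over the indices `j`
violating the extended bounds, lies inside the extended bounds
`[(1−ρ)αⱼ, (1+ρ)βⱼ]` in every coordinate. -/
theorem stmt_15 {n : ℕ} (α β θstar v : Fin n → ℝ) (ρ : ℝ)
    (hρ : ρ ∈ Set.Icc (0 : ℝ) 1)
    (hαβ : ∀ j, 0 ≤ α j ∧ α j ≤ β j)
    (hθ : ∀ j, α j ≤ θstar j ∧ θstar j ≤ β j)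
    (p : Fin n → ℝ) (hp : p = fun j => θstar j + v j)
    (Jminus Jplus : Finset (Fin n))
    (hJminus : Jminus = Finset.univ.filter fun j => p j < (1 - ρ) * α j)
    (hJplus : Jplus = Finset.univ.filter fun j => (1 + ρ) * β j < p j)
    (c : ℝ)
    (hc : c = (insert (1 : ℝ)
        ((Jminus.image fun j => ((1 - ρ) * α j - θstar j) ^ 2 / (v j) ^ 2)
          ∪ (Jplus.image fun j => ((1 + ρ) * β j - θstar j) ^ 2 / (v j) ^ 2))).min'
        (Finset.insert_nonempty _ _)) :
    ∀ j, (1 - ρ) * α j ≤ θstar j + Real.sqrt c * v j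
      ∧ θstar j + Real.sqrt c * v j ≤ (1 + ρ) * β j := by
  subst hp hJminus hJplus
  obtain ⟨hρ0, hρ1⟩ := hρ
  have hc1 : c ≤ 1 := hc ▸ Finset.min'_le _ _ (Finset.mem_insert_self _ _)
  have hsc1 : Real.sqrt c ≤ 1 := by
    calc Real.sqrt c ≤ Real.sqrt 1 := Real.sqrt_le_sqrt hc1
    _ = 1 := Real.sqrt_one
  have hsc0 : 0 ≤ Real.sqrt c := Real.sqrt_nonneg c
  intro j
  have hθl : (1 - ρ) * α j ≤ θstar j := by nlinarith [(hαβ j).1, (hθ j).1]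
  have hθu : θstar j ≤ (1 + ρ) * β j := by nlinarith [(hαβ j).1, (hθ j).2, (hθ j).1]
  constructor
  · rcases le_or_gt 0 (v j) with hv | hv
    · nlinarith [mul_nonneg hsc0 hv]
    · rcases le_or_gt ((1 - ρ) * α j) (θstar j + v j) with hpj | hpj
      · nlinarith
      · have hmem : ((1 - ρ) * α j - θstar j) ^ 2 / (v j) ^ 2 ∈
            insert (1 : ℝ)
              (((Finset.univ.filter fun j => θstar j + v j < (1 - ρ) * α j).image
                  fun j => ((1 - ρ) * α j - θstar j) ^ 2 / (v j) ^ 2)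
                ∪ ((Finset.univ.filter fun j => (1 + ρ) * β j < θstar j + v j).image
                  fun j => ((1 + ρ) * β j - θstar j) ^ 2 / (v j) ^ 2)) := by
          exact Finset.mem_insert_of_mem (Finset.mem_union_left _
            (Finset.mem_image_of_mem _ (Finset.mem_filter.2 ⟨Finset.mem_univ _, hpj⟩)))
        have hcle : c ≤ ((1 - ρ) * α j - θstar j) ^ 2 / (v j) ^ 2 :=
          hc ▸ Finset.min'_le _ _ hmem
        have key : Real.sqrt c ≤ ((1 - ρ) * α j - θstar j) / v j := by
          have h1 : Real.sqrt c ≤ Real.sqrt (((1 - ρ) * α j - θstar j) ^ 2 / (v j) ^ 2) :=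
            Real.sqrt_le_sqrt hcle
          rw [Real.sqrt_div (sq_nonneg _), Real.sqrt_sq_eq_abs, Real.sqrt_sq_eq_abs,
            abs_of_nonpos (by linarith), abs_of_nonpos hv.le] at h1
          calc Real.sqrt c ≤ -((1 - ρ) * α j - θstar j) / -v j := h1
          _ = ((1 - ρ) * α j - θstar j) / v j := by rw [neg_div_neg_eq]
        have := mul_le_mul_of_nonpos_right key hv.le
        have hvne : v j ≠ 0 := ne_of_lt hv
        rw [div_mul_cancel₀ _ hvne] at this
        linarith
  · rcases le_or_gt (v j) 0 with hv | hv
    · nlinarith [mul_nonneg hsc0 (neg_nonneg.2 hv)]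
    · rcases le_or_gt (θstar j + v j) ((1 + ρ) * β j) with hpj | hpj
      · nlinarith
      · have hmem : ((1 + ρ) * β j - θstar j) ^ 2 / (v j) ^ 2 ∈
            insert (1 : ℝ)
              (((Finset.univ.filter fun j => θstar j + v j < (1 - ρ) * α j).image
                  fun j => ((1 - ρ) * α j - θstar j) ^ 2 / (v j) ^ 2)
                ∪ ((Finset.univ.filter fun j => (1 + ρ) * β j < θstar j + v j).image
                  fun j => ((1 + ρ) * β j - θstar j) ^ 2 / (v j) ^ 2)) := by
          exact Finset.mem_insert_of_mem (Finset.mem_union_right _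
            (Finset.mem_image_of_mem _ (Finset.mem_filter.2 ⟨Finset.mem_univ _, hpj⟩)))
        have hcle : c ≤ ((1 + ρ) * β j - θstar j) ^ 2 / (v j) ^ 2 :=
          hc ▸ Finset.min'_le _ _ hmem
        have key : Real.sqrt c ≤ ((1 + ρ) * β j - θstar j) / v j := by
          have h1 : Real.sqrt c ≤ Real.sqrt (((1 + ρ) * β j - θstar j) ^ 2 / (v j) ^ 2) :=
            Real.sqrt_le_sqrt hcle
          rwa [Real.sqrt_div (sq_nonneg _), Real.sqrt_sq_eq_abs, Real.sqrt_sq_eq_abs,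
            abs_of_nonneg (by linarith), abs_of_pos hv] at h1
        have := mul_le_mul_of_nonneg_right key hv.le
        rw [div_mul_cancel₀ _ (ne_of_gt hv)] at this
        linarith
end
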